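/- Let (B,O) → (B',O) → (B',O') be one iteration of Scarf's algorithm on a block-partitioned hypergraphic instance with artificial 0-th row. Suppose the leaving column j_ℓ of the ordinal pivot O → O' is i-disliked w.r.t. O, where i is the separator of (B,O). Then: (i) the reference column j_r of the ordinal pivot is the rightmost column of O; (ii) j_r is 0-disliked w.r.t. O and the entering column j* is 0-disliked w.r.t. O'; and (iii) if the algorithm does not terminate, the separator of (B',O') is some i' > i. -/

import Mathlib

/-!
Row `0` decreases along the columns, so the `0`-disliked column `j→` of `O` is its rightmost
column, and `i = blk j→` is its block. The only column of `O` that row `i` can like less than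
`j→` is its singleton column, the row minimum; if present it is the leaving column `jₗ`. Hence
`j→` is the `i`-disliked column of `O \ {jₗ}`, i.e. `jᵣ = j→`, whose partner in the perfect
matching "row dislikes column of `O`" is row `0`. The entering column must be liked better than
`O \ {jₗ}` by every row but `0`; since some row dominates it on `O`, that row is `0`, which puts
`j*` right of `j→`, and being liked better than `j→` by row `i` excludes the block of `j→`.
-/

/-- The block-partitioned matrices of a hypergraphic preference system, augmented with
an artificial `0`-th row and column.  Rows are the vertices `0,1,…,n` (vertex `0`
artificial), columns are the hyperedges `0,1,…,m`; column `Fin.castLE _ i` is the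
singleton hyperedge `{i}`.  `Inc i j` records that vertex `i` belongs to the
hyperedge of column `j`, and `blk j` is the block (the maximum vertex of the
hyperedge) of each non-singleton column `j` (those with `n < j`). -/
structure BlockPartitioned (n m : ℕ) where
  hnm : n ≤ m
  C : Matrix (Fin (n+1)) (Fin (m+1)) ℝ
  Inc : Fin (n+1) → Fin (m+1) → Prop
  blk : Fin (m+1) → Fin (n+1)
  /-- every row of `C` has pairwise distinct entries -/
  distinct : ∀ i : Fin (n+1), ∀ j k : Fin (m+1), j ≠ k → C i j ≠ C i k
  /-- the `0`-th row is `(0, m, m-1, …, 1)` -/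
  row0_zero : C 0 0 = 0
  row0_pos : ∀ j : Fin (m+1), j ≠ 0 → 0 < C 0 j
  row0_dec : ∀ j k : Fin (m+1), j ≠ 0 → j < k → C 0 k < C 0 j
  /-- the singleton column of `i'` is incident exactly to `i'` -/
  inc_sing : ∀ i i' : Fin (n+1), Inc i (Fin.castLE (Nat.succ_le_succ hnm) i') ↔ i = i'
  /-- singleton entries are `0` and are the row minimum -/
  sing_zero : ∀ i : Fin (n+1), i ≠ 0 → C i (Fin.castLE (Nat.succ_le_succ hnm) i) = 0
  sing_min : ∀ i : Fin (n+1), i ≠ 0 → ∀ j : Fin (m+1),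
    j ≠ Fin.castLE (Nat.succ_le_succ hnm) i →
    C i (Fin.castLE (Nat.succ_le_succ hnm) i) < C i j
  /-- incident entries of a row are smaller than non-incident ones -/
  inc_lt_noninc : ∀ i : Fin (n+1), i ≠ 0 → ∀ j k : Fin (m+1),
    Inc i j → ¬ Inc i k → C i j < C i k
  /-- non-incident entries of a row decrease from left to right -/
  noninc_dec : ∀ i : Fin (n+1), i ≠ 0 → ∀ j k : Fin (m+1),
    ¬ Inc i j → ¬ Inc i k → j < k → C i k < C i j
  /-- a non-singleton column is incident to its block vertex, which is its maximum -/
  blk_mem : ∀ j : Fin (m+1), n < (j : ℕ) → Inc (blk j) j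
  blk_max : ∀ j : Fin (m+1), n < (j : ℕ) → ∀ i, Inc i j → i ≤ blk j
  blk_ne0 : ∀ j : Fin (m+1), n < (j : ℕ) → blk j ≠ 0
  /-- blocks appear in increasing order -/
  blk_ord : ∀ j k : Fin (m+1), n < (j : ℕ) → n < (k : ℕ) → j < k → blk j ≤ blk k
  /-- within a block, entries of the block row decrease (preference order) -/
  inblock_dec : ∀ j k : Fin (m+1), n < (j : ℕ) → n < (k : ℕ) →
    blk j = blk k → j < k → C (blk j) k < C (blk j) j

/-- Column `j` is `i`-disliked w.r.t. `O`: `j ∈ O` attains `min_{l ∈ O} C i l`. -/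
def Dislikes {n m : ℕ} (C : Matrix (Fin (n+1)) (Fin (m+1)) ℝ)
    (O : Finset (Fin (m+1))) (i : Fin (n+1)) (j : Fin (m+1)) : Prop :=
  j ∈ O ∧ ∀ l ∈ O, C i j ≤ C i l

section Dislikes

variable {n m : ℕ} {C : Matrix (Fin (n+1)) (Fin (m+1)) ℝ} {O : Finset (Fin (m+1))}

theorem Dislikes.exists (i : Fin (n+1)) (hO : O.Nonempty) : ∃ j, Dislikes C O i j := by
  obtain ⟨j, hj, hmin⟩ := O.exists_min_image (C i) hO
  exact ⟨j, hj, hmin⟩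

theorem Dislikes.unique_col (hC : ∀ i j k, j ≠ k → C i j ≠ C i k) {i : Fin (n+1)}
    {j k : Fin (m+1)} (hj : Dislikes C O i j) (hk : Dislikes C O i k) : j = k := by
  by_contra hne
  exact hC i j k hne (le_antisymm (hj.2 k hk.1) (hk.2 j hj.1))

-- The dislike relation is then a perfect matching between the rows and `O`.
theorem Dislikes.unique_row (hC : ∀ i j k, j ≠ k → C i j ≠ C i k) (hO : O.card = n + 1)
    (hcov : ∀ j ∈ O, ∃ i, Dislikes C O i j) {i i' : Fin (n+1)} {j : Fin (m+1)}
    (hi : Dislikes C O i j) (hi' : Dislikes C O i' j) : i = i' := by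
  choose g hg using fun l : O => hcov l.1 l.2
  have hg_inj : Function.Injective g := fun a b hab =>
    Subtype.ext (Dislikes.unique_col hC (hg a) (hab ▸ hg b))
  have hg_surj : Function.Surjective g :=
    ((Fintype.bijective_iff_injective_and_card g).mpr
      ⟨hg_inj, by simp [Fintype.card_coe, hO]⟩).2
  have key : ∀ {v}, Dislikes C O v j → v = g ⟨j, hi.1⟩ := fun {v} hv => by
    obtain ⟨a, rfl⟩ := hg_surj v
    exact congrArg g (Subtype.ext (Dislikes.unique_col hC (hg a) hv))
  exact (key hi).trans (key hi').symm

end Dislikes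

namespace BlockPartitioned

variable {n m : ℕ} (BP : BlockPartitioned n m) {O : Finset (Fin (m+1))}

def singletonCol (i : Fin (n+1)) : Fin (m+1) := Fin.castLE (Nat.succ_le_succ BP.hnm) i

theorem eq_singletonCol_of_inc {i : Fin (n+1)} {l : Fin (m+1)} (hinc : BP.Inc i l)
    (hl : (l : ℕ) ≤ n) : l = BP.singletonCol i := by
  have hl' : l = BP.singletonCol ⟨l, Nat.lt_succ_of_le hl⟩ := Fin.ext rfl
  rw [hl', (BP.inc_sing i _).mp (hl' ▸ hinc)]

theorem dislikes_singletonCol {i : Fin (n+1)} (hi : i ≠ 0) (hO : BP.singletonCol i ∈ O) :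
    Dislikes BP.C O i (BP.singletonCol i) := by
  refine ⟨hO, fun l _ => ?_⟩
  rcases eq_or_ne l (BP.singletonCol i) with rfl | hl
  · exact le_rfl
  · exact (BP.sing_min i hi l hl).le

theorem zero_le_C_zero (l : Fin (m+1)) : BP.C 0 0 ≤ BP.C 0 l := by
  rcases eq_or_ne l 0 with rfl | hl
  · exact le_rfl
  · exact BP.row0_zero ▸ (BP.row0_pos l hl).le

theorem dislikes_zero_of_zero_mem (h0 : (0 : Fin (m+1)) ∈ O) : Dislikes BP.C O 0 0 :=
  ⟨h0, fun l _ => BP.zero_le_C_zero l⟩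

theorem dislikes_zero_of_forall_le (h0 : (0 : Fin (m+1)) ∉ O) {j : Fin (m+1)} (hj : j ∈ O)
    (hle : ∀ l ∈ O, l ≤ j) : Dislikes BP.C O 0 j := by
  refine ⟨hj, fun l hl => ?_⟩
  rcases (hle l hl).lt_or_eq with hlt | rfl
  · exact (BP.row0_dec l j (ne_of_mem_of_not_mem hl h0) hlt).le
  · exact le_rfl

theorem le_of_dislikes_zero {j : Fin (m+1)} (hj : Dislikes BP.C O 0 j) (hj0 : j ≠ 0) :
    ∀ l ∈ O, l ≤ j := fun l hl =>
  not_lt.mp fun hlt => (BP.row0_dec j l hj0 hlt).not_ge (hj.2 l hl)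

theorem zero_notMem_of_dislikes_zero {j : Fin (m+1)} (hj : Dislikes BP.C O 0 j)
    (hj0 : j ≠ 0) : (0 : Fin (m+1)) ∉ O := fun h0 =>
  (BP.row0_zero ▸ BP.row0_pos j hj0).not_ge (BP.row0_zero ▸ hj.2 0 h0)

theorem lt_of_dislikes_zero {j k : Fin (m+1)} (hj : Dislikes BP.C O 0 j) (hk : k ∉ O)
    (hk0 : k ≠ 0) (hdom : ∃ i, ∀ l ∈ O, BP.C i k ≤ BP.C i l)
    (hK : ∀ i ≠ 0, ∃ l ∈ O, BP.C i l < BP.C i k) : j < k := by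
  obtain ⟨i, hi⟩ := hdom
  rcases eq_or_ne i 0 with rfl | hi0
  · refine lt_of_le_of_ne (not_lt.mp fun hkj => ?_) (ne_of_mem_of_not_mem hj.1 hk)
    exact (BP.row0_dec k j hk0 hkj).not_ge (hi j hj.1)
  · obtain ⟨l, hl, hlt⟩ := hK i hi0
    exact absurd (hi l hl) hlt.not_ge

theorem C_blk_lt_of_inc {j l : Fin (m+1)} (hj : n < (j : ℕ)) (hl : n < (l : ℕ)) (hlj : l < j)
    (hinc : BP.Inc (BP.blk j) l) : BP.C (BP.blk j) j < BP.C (BP.blk j) l := by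
  have hblk : BP.blk l = BP.blk j :=
    le_antisymm (BP.blk_ord l j hl hj hlj) (BP.blk_max l hl _ hinc)
  simpa only [hblk] using BP.inblock_dec l j hl hj hblk hlj

theorem dislikes_blk_of_forall_le {j : Fin (m+1)} (hj : n < (j : ℕ)) (hjO : j ∈ O)
    (hle : ∀ l ∈ O, l ≤ j) (hsing : BP.singletonCol (BP.blk j) ∉ O) :
    Dislikes BP.C O (BP.blk j) j := by
  refine ⟨hjO, fun l hl => ?_⟩
  rcases eq_or_ne l j with rfl | hlj
  · exact le_rfl
  by_cases hinc : BP.Inc (BP.blk j) l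
  · rcases le_or_gt (l : ℕ) n with hln | hln
    · exact absurd (BP.eq_singletonCol_of_inc hinc hln ▸ hl) hsing
    · exact (BP.C_blk_lt_of_inc hj hln (lt_of_le_of_ne (hle l hl) hlj) hinc).le
  · exact (BP.inc_lt_noninc _ (BP.blk_ne0 j hj) j l (BP.blk_mem j hj) hinc).le

theorem blk_lt_of_C_lt {j k : Fin (m+1)} (hj : n < (j : ℕ)) (hjk : j < k)
    (hC : BP.C (BP.blk j) j < BP.C (BP.blk j) k) : BP.blk j < BP.blk k := by
  have hk : n < (k : ℕ) := hj.trans hjk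
  refine lt_of_le_of_ne (BP.blk_ord j k hj hk hjk) fun h => ?_
  exact (BP.inblock_dec j k hj hk h hjk).not_gt hC

end BlockPartitioned

theorem separator_strictly_increases_general (n m : ℕ) (BP : BlockPartitioned n m)
    (O : Finset (Fin (m+1)))
    (hOcard : O.card = n + 1)
    (hdom : ∀ j : Fin (m+1), ∃ i, ∀ l ∈ O, BP.C i j ≤ BP.C i l)
    (jar : Fin (m+1)) (hjar : Dislikes BP.C O 0 jar) (hjarblk : n < (jar : ℕ))
    (jl : Fin (m+1)) (hjl : Dislikes BP.C O (BP.blk jar) jl)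
    (jr : Fin (m+1)) (hjr : Dislikes BP.C (O.erase jl) (BP.blk jar) jr)
    (ir : Fin (n+1)) (hir : Dislikes BP.C O ir jr)
    (jstar : Fin (m+1)) (hjs_notin : jstar ∉ O)
    (hjsK : ∀ i, i ≠ ir → ∀ l, Dislikes BP.C (O.erase jl) i l →
      BP.C i l < BP.C i jstar) :
    (∀ l ∈ O, l ≤ jr) ∧
    Dislikes BP.C O 0 jr ∧
    Dislikes BP.C (insert jstar (O.erase jl)) 0 jstar ∧
    (jstar ≠ 0 → n < (jstar : ℕ) ∧ BP.blk jar < BP.blk jstar) := by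
  have hjar0 : jar ≠ 0 := fun h => by simp [h] at hjarblk
  have hleO := BP.le_of_dislikes_zero hjar hjar0
  have h0O := BP.zero_notMem_of_dislikes_zero hjar hjar0
  have hcov : ∀ j ∈ O, ∃ i, Dislikes BP.C O i j := fun j hj =>
    (hdom j).imp fun _ => And.intro hj
  have hblk0 := BP.blk_ne0 jar hjarblk
  have hjl_ne : jl ≠ jar := fun h =>
    hblk0 (Dislikes.unique_row BP.distinct hOcard hcov (h ▸ hjl) hjar)
  have hsing : BP.singletonCol (BP.blk jar) ∉ O.erase jl := fun h =>
    (Finset.mem_erase.mp h).1 <| Dislikes.unique_col BP.distinct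
      (BP.dislikes_singletonCol hblk0 (Finset.mem_of_mem_erase h)) hjl
  have hjar_mem : jar ∈ O.erase jl := Finset.mem_erase.mpr ⟨hjl_ne.symm, hjar.1⟩
  have hdis : Dislikes BP.C (O.erase jl) (BP.blk jar) jar := BP.dislikes_blk_of_forall_le
    hjarblk hjar_mem (fun l hl => hleO l (Finset.mem_of_mem_erase hl)) hsing
  obtain rfl : jar = jr := Dislikes.unique_col BP.distinct hdis hjr
  obtain rfl : ir = 0 := Dislikes.unique_row BP.distinct hOcard hcov hir hjar
  have hjs_right : jstar ≠ 0 → jar < jstar := fun hs0 =>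
    BP.lt_of_dislikes_zero hjar hjs_notin hs0 (hdom jstar) fun i hi => by
      obtain ⟨l, hl⟩ := Dislikes.exists i ⟨jar, hjar_mem⟩
      exact ⟨l, Finset.mem_of_mem_erase hl.1, hjsK i hi l hl⟩
  refine ⟨hleO, hjar, ?_, fun hs0 => ⟨hjarblk.trans (hjs_right hs0),
    BP.blk_lt_of_C_lt hjarblk (hjs_right hs0) (hjsK _ hblk0 _ hdis)⟩⟩
  rcases eq_or_ne jstar 0 with rfl | hs0
  · exact BP.dislikes_zero_of_zero_mem (Finset.mem_insert_self _ _)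
  · refine BP.dislikes_zero_of_forall_le ?_ (Finset.mem_insert_self _ _) fun l hl => ?_
    · exact fun h => (Finset.mem_insert.mp h).elim (fun h => hs0 h.symm)
        fun h => h0O (Finset.mem_of_mem_erase h)
    · rcases Finset.mem_insert.mp hl with rfl | hl
      · exact le_rfl
      · exact (hleO l (Finset.mem_of_mem_erase hl)).trans (hjs_right hs0).le

/-- Separator-change lemma.  In one iteration `(B,O) → (B',O) → (B',O')` on a
block-partitioned instance, if the leaving column `j_ℓ` of the ordinal pivot is
`i`-disliked w.r.t. `O` where `i = blk j→` is the separator of `(B,O)`, then: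
(i) the reference column `j_r` is the rightmost column of `O`; (ii) `j_r` is
`0`-disliked w.r.t. `O` and the entering column `j*` is `0`-disliked w.r.t.
`O' = O ∪ {j*} \ {j_ℓ}`; (iii) if the algorithm does not terminate (`j* ≠ 0`), the
separator of `(B',O')` is some `i' > i`. -/
theorem separator_strictly_increases (n m : ℕ) (BP : BlockPartitioned n m)
    (B O : Finset (Fin (m+1)))
    (hBcard : B.card = n + 1) (hOcard : O.card = n + 1)
    (hBO : B \ O = {0})
    (hdom : ∀ j : Fin (m+1), ∃ i, ∀ l ∈ O, BP.C i j ≤ BP.C i l)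
    (jar : Fin (m+1)) (hjar : Dislikes BP.C O 0 jar) (hjarblk : n < (jar : ℕ))
    (jl : Fin (m+1)) (hjl : Dislikes BP.C O (BP.blk jar) jl)
    (jr : Fin (m+1)) (hjr : Dislikes BP.C (O.erase jl) (BP.blk jar) jr)
    (ir : Fin (n+1)) (hir : Dislikes BP.C O ir jr)
    (jstar : Fin (m+1)) (hjs_notin : jstar ∉ O)
    (hjsK : ∀ i, i ≠ ir → ∀ l, Dislikes BP.C (O.erase jl) i l →
      BP.C i l < BP.C i jstar)
    (hjsmax : ∀ k, k ∉ O →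
      (∀ i, i ≠ ir → ∀ l, Dislikes BP.C (O.erase jl) i l → BP.C i l < BP.C i k) →
      BP.C ir k ≤ BP.C ir jstar) :
    (∀ l ∈ O, l ≤ jr) ∧
    Dislikes BP.C O 0 jr ∧
    Dislikes BP.C (insert jstar (O.erase jl)) 0 jstar ∧
    (jstar ≠ 0 → n < (jstar : ℕ) ∧ BP.blk jar < BP.blk jstar) :=
  separator_strictly_increases_general n m BP O hOcard hdom jar hjar hjarblk jl hjl jr hjr ir hir
    jstar hjs_notin hjsK
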